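/- arXiv:2204.08231 — 3 statements merged into one kernel-verified Lean document; each statement's English description precedes it below -/
import Mathlib

section
/- The function s ↦ s / (1 + C s^((α-1)/2) t)^(2/(α-1)) is monotone increasing on [0, ∞) for every fixed t ≥ 0, C ≥ 0 and α > 1. -/
open Real Set

/-! With `p = (α - 1) / 2` and `u = s ^ p`, the profile equals `(u / (1 + C t u)) ^ p⁻¹`, a composite
of three maps increasing on `[0, ∞)`: `s ↦ s ^ p`, `u ↦ u / (1 + c u)` for `c ≥ 0`, and `x ↦ x ^ p⁻¹`. -/

lemma monotoneOn_div_one_add_mul {c : ℝ} (hc : 0 ≤ c) :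
    MonotoneOn (fun u : ℝ => u / (1 + c * u)) (Ici 0) := by
  intro u (hu : 0 ≤ u) v (hv : 0 ≤ v) huv
  rw [div_le_div_iff₀ (by positivity) (by positivity)]
  linarith

lemma div_one_add_mul_rpow_rpow_inv {p c s : ℝ} (hp : p ≠ 0) (hc : 0 ≤ c) (hs : 0 ≤ s) :
    s / (1 + c * s ^ p) ^ p⁻¹ = (s ^ p / (1 + c * s ^ p)) ^ p⁻¹ := by
  rw [div_rpow (by positivity) (by positivity), ← rpow_mul hs, mul_inv_cancel₀ hp, rpow_one]

theorem monotoneOn_div_one_add_mul_rpow_rpow_inv {p c : ℝ} (hp : 0 < p) (hc : 0 ≤ c) :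
    MonotoneOn (fun s : ℝ => s / (1 + c * s ^ p) ^ p⁻¹) (Ici 0) := by
  have hpow := monotoneOn_rpow_Ici_of_exponent_nonneg hp.le
  have hroot := monotoneOn_rpow_Ici_of_exponent_nonneg (inv_nonneg.2 hp.le)
  refine ((hroot.comp (monotoneOn_div_one_add_mul hc) ?_).comp hpow ?_).congr ?_
  · intro u (hu : 0 ≤ u)
    exact div_nonneg hu (by positivity)
  · intro s (hs : 0 ≤ s)
    exact rpow_nonneg hs p
  · intro s (hs : 0 ≤ s)
    exact (div_one_add_mul_rpow_rpow_inv hp.ne' hc hs).symm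

/-- The function s ↦ s / (1 + C s^((α-1)/2) t)^(2/(α-1)) is monotone increasing on [0,∞)
for fixed t ≥ 0, C ≥ 0 and α > 1. -/
theorem mono_decay_profile (α C t : ℝ) (hα : 1 < α) (hC : 0 ≤ C) (ht : 0 ≤ t) :
    MonotoneOn (fun s : ℝ => s / (1 + C * s ^ ((α - 1) / 2) * t) ^ (2 / (α - 1)))
      (Set.Ici (0 : ℝ)) := by
  have hp : 0 < (α - 1) / 2 := by linarith
  convert monotoneOn_div_one_add_mul_rpow_rpow_inv hp (mul_nonneg hC ht) using 4 with s
  · ring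
  · rw [inv_div]
end

section
/- Let Ω ⊂ ℝ be a bounded open interval and let 0 < α < 1. If v ∈ H¹(Ω) ∩ W³_{α+1}(Ω) satisfies ∫_Ω v dx = 0, v' = 0 on ∂Ω, and v''' = 0 on ∂Ω, then there exists C > 0 depending only on α and Ω such that (1/2)∫_Ω |v'|² dx ≤ C ‖v'''‖²_{L_{α+1}(Ω)}. -/
open Real MeasureTheory Set intervalIntegral

/-! Since `v'` vanishes at both ends, Rolle gives a zero of `v''` inside the interval, so two
applications of the fundamental theorem of calculus bound `sup |v'|` by `(b - a) ‖v'''‖_{L₁}`.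
Jensen's inequality for the convex function `t ↦ t ^ (α + 1)` then bounds `‖v'''‖_{L₁}` by a
multiple of `‖v'''‖_{L_{α+1}}`. -/

theorem abs_le_integral_abs_deriv_of_eq_zero {g : ℝ → ℝ} {a b c x : ℝ} (hg : ContDiff ℝ 1 g)
    (hc : c ∈ Icc a b) (hgc : g c = 0) (hx : x ∈ Icc a b) :
    |g x| ≤ ∫ t in a..b, |deriv g t| := by
  obtain ⟨hgd, hg'⟩ := contDiff_one_iff_deriv.mp hg
  have hab : a ≤ b := hc.1.trans hc.2
  have hsub : uIoc c x ⊆ uIoc a b := by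
    rw [uIoc_of_le hab]
    exact fun t ht => ⟨(le_min hc.1 hx.1).trans_lt ht.1, ht.2.trans (max_le hc.2 hx.2)⟩
  calc |g x| = |∫ t in c..x, deriv g t| := by
        rw [integral_deriv_eq_sub (fun t _ => hgd t) (hg'.intervalIntegrable _ _), hgc, sub_zero]
    _ ≤ |(∫ t in c..x, |deriv g t|)| := by
        simpa only [Real.norm_eq_abs] using norm_integral_le_abs_integral_norm (f := deriv g)
    _ ≤ |(∫ t in a..b, |deriv g t|)| :=
        abs_integral_mono_interval hsub (.of_forall fun t => abs_nonneg _)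
          (hg'.abs.intervalIntegrable a b)
    _ = ∫ t in a..b, |deriv g t| := abs_of_nonneg (integral_nonneg hab fun t _ => abs_nonneg _)

theorem integral_sq_le_of_eq_zero_of_eq_zero {g : ℝ → ℝ} {a b : ℝ} (hab : a < b)
    (hg : ContDiff ℝ 2 g) (hga : g a = 0) (hgb : g b = 0) :
    ∫ x in a..b, g x ^ 2 ≤ (b - a) ^ 3 * (∫ x in a..b, |iteratedDeriv 2 g x|) ^ 2 := by
  have hg' : ContDiff ℝ 1 (deriv g) :=
    (contDiff_succ_iff_deriv.mp (show ContDiff ℝ (1 + 1) g from hg)).2.2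
  rw [iteratedDeriv_succ, iteratedDeriv_one]
  set A := ∫ x in a..b, |deriv (deriv g) x|
  obtain ⟨c, hc, hg'c⟩ := exists_deriv_eq_zero hab hg.continuous.continuousOn (hga.trans hgb.symm)
  have hderiv_le : ∀ x ∈ Icc a b, |deriv g x| ≤ A := fun x hx =>
    abs_le_integral_abs_deriv_of_eq_zero hg' (Ioo_subset_Icc_self hc) hg'c hx
  have hint_deriv_le : ∫ x in a..b, |deriv g x| ≤ (b - a) * A := by
    simpa using integral_mono_on hab.le (hg'.continuous.abs.intervalIntegrable a b)
      (intervalIntegrable_const (μ := volume)) hderiv_le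
  have hg_le : ∀ x ∈ Icc a b, g x ^ 2 ≤ ((b - a) * A) ^ 2 := fun x hx => by
    rw [← sq_abs]
    gcongr
    exact (abs_le_integral_abs_deriv_of_eq_zero (hg.of_le (by norm_num))
      (left_mem_Icc.mpr hab.le) hga hx).trans hint_deriv_le
  calc ∫ x in a..b, g x ^ 2 ≤ (b - a) * ((b - a) * A) ^ 2 := by
        simpa using integral_mono_on hab.le ((hg.continuous.pow 2).intervalIntegrable a b)
          (intervalIntegrable_const (μ := volume)) hg_le
    _ = (b - a) ^ 3 * A ^ 2 := by ring

theorem rpow_integral_abs_le {f : ℝ → ℝ} {a b p : ℝ} (hab : a < b) (hp : 1 ≤ p)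
    (hf : IntervalIntegrable f volume a b)
    (hfp : IntervalIntegrable (fun x => |f x| ^ p) volume a b) :
    (∫ x in a..b, |f x|) ^ p ≤ (b - a) ^ (p - 1) * ∫ x in a..b, |f x| ^ p := by
  have hL : 0 < b - a := sub_pos.mpr hab
  have hjensen := (convexOn_rpow hp).map_set_average_le (continuousOn_id.rpow_const
      fun _ _ => Or.inr (zero_le_one.trans hp)) isClosed_Ici
    (by simp [volume_uIoc, hL.ne']) (by simp [volume_uIoc])
    (.of_forall fun x => abs_nonneg (f x)) (intervalIntegrable_iff.mp hf.abs)
    (intervalIntegrable_iff.mp hfp)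
  rw [interval_average_eq_div, interval_average_eq_div,
    div_rpow (integral_nonneg hab.le fun _ _ => abs_nonneg _) hL.le,
    div_le_iff₀ (rpow_pos_of_pos hL p)] at hjensen
  calc _ ≤ (∫ x in a..b, |f x| ^ p) / (b - a) * (b - a) ^ p := hjensen
    _ = (b - a) ^ (p - 1) * ∫ x in a..b, |f x| ^ p := by
        rw [rpow_sub_one hL.ne']
        ring

theorem sq_integral_abs_le {f : ℝ → ℝ} {a b p : ℝ} (hab : a < b) (hp : 1 ≤ p)
    (hf : IntervalIntegrable f volume a b)
    (hfp : IntervalIntegrable (fun x => |f x| ^ p) volume a b) :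
    (∫ x in a..b, |f x|) ^ 2 ≤ (b - a) ^ (2 - 2 / p) * (∫ x in a..b, |f x| ^ p) ^ (2 / p) := by
  have hp0 : 0 < p := zero_lt_one.trans_le hp
  have hL : 0 ≤ b - a := sub_nonneg.mpr hab.le
  have hA : 0 ≤ ∫ x in a..b, |f x| := integral_nonneg hab.le fun _ _ => abs_nonneg _
  calc (∫ x in a..b, |f x|) ^ 2 = ((∫ x in a..b, |f x|) ^ p) ^ (2 / p) := by
        rw [← rpow_mul hA, mul_div_cancel₀ _ hp0.ne', rpow_two]
    _ ≤ ((b - a) ^ (p - 1) * ∫ x in a..b, |f x| ^ p) ^ (2 / p) := by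
        gcongr
        exact rpow_integral_abs_le hab hp hf hfp
    _ = (b - a) ^ (2 - 2 / p) * (∫ x in a..b, |f x| ^ p) ^ (2 / p) := by
        rw [mul_rpow (rpow_nonneg hL _) (integral_nonneg hab.le fun _ _ => by positivity),
          ← rpow_mul hL]
        congr 2
        field_simp

theorem poincare_higher_order_alpha_lt_one_general (a b α : ℝ) (hab : a < b) (hα0 : 0 < α) :
    ∃ C > 0, ∀ v : ℝ → ℝ, ContDiff ℝ 3 v →
      (∫ x in a..b, v x) = 0 →
      deriv v a = 0 → deriv v b = 0 →
      iteratedDeriv 3 v a = 0 → iteratedDeriv 3 v b = 0 →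
      (1 / 2) * (∫ x in a..b, (deriv v x) ^ 2)
        ≤ C * ((∫ x in a..b, |iteratedDeriv 3 v x| ^ (α + 1)) ^ (2 / (α + 1))) := by
  have hL : 0 < b - a := sub_pos.mpr hab
  refine ⟨(b - a) ^ 3 * (b - a) ^ (2 - 2 / (α + 1)), by positivity, ?_⟩
  intro v hv _ hv'a hv'b _ _
  have hv' : ContDiff ℝ 2 (deriv v) :=
    (contDiff_succ_iff_deriv.mp (show ContDiff ℝ (2 + 1) v from hv)).2.2
  have hv3 : Continuous (iteratedDeriv 3 v) := hv.continuous_iteratedDeriv 3 le_rfl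
  have henergy : 0 ≤ ∫ x in a..b, deriv v x ^ 2 := integral_nonneg hab.le fun _ _ => sq_nonneg _
  rw [iteratedDeriv_succ'] at hv3 ⊢
  calc (1 / 2) * (∫ x in a..b, deriv v x ^ 2) ≤ ∫ x in a..b, deriv v x ^ 2 := by linarith
    _ ≤ (b - a) ^ 3 * (∫ x in a..b, |iteratedDeriv 2 (deriv v) x|) ^ 2 :=
        integral_sq_le_of_eq_zero_of_eq_zero hab hv' hv'a hv'b
    _ ≤ (b - a) ^ 3 * ((b - a) ^ (2 - 2 / (α + 1)) *
          (∫ x in a..b, |iteratedDeriv 2 (deriv v) x| ^ (α + 1)) ^ (2 / (α + 1))) := by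
        gcongr
        exact sq_integral_abs_le hab (by linarith) (hv3.intervalIntegrable a b)
          ((hv3.abs.rpow_const fun _ => Or.inr (by linarith)).intervalIntegrable a b)
    _ = _ := by ring

/-- Higher-order Poincaré estimate, case 0 < α < 1: on a bounded interval Ω = (a,b),
for v with mean zero, v' = 0 and v''' = 0 at the boundary,
E[v] = (1/2)∫|v'|² ≤ C ‖v'''‖²_{L_{α+1}}. -/
theorem poincare_higher_order_alpha_lt_one (a b α : ℝ) (hab : a < b) (hα0 : 0 < α) (hα1 : α < 1) :
    ∃ C > 0, ∀ v : ℝ → ℝ, ContDiff ℝ 3 v →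
      (∫ x in a..b, v x) = 0 →
      deriv v a = 0 → deriv v b = 0 →
      iteratedDeriv 3 v a = 0 → iteratedDeriv 3 v b = 0 →
      (1 / 2) * (∫ x in a..b, (deriv v x) ^ 2)
        ≤ C * ((∫ x in a..b, |iteratedDeriv 3 v x| ^ (α + 1)) ^ (2 / (α + 1))) :=
  poincare_higher_order_alpha_lt_one_general a b α hab hα0
end

section
/- Let m > 0, α > 0 and Ω ⊂ ℝ a bounded interval. If u ∈ W³_{α+1}(Ω) satisfies u(x) ≥ m for all x ∈ Ω, then ∫_Ω u^{α+2} |u'''|^{α+1} dx ≥ m^{α+2} ‖u'''‖^{α+1}_{L_{α+1}(Ω)}; combined with the Poincaré estimate E[u − ū] ≤ C‖u'''‖²_{L_{α+1}(Ω)} for mean-zero deviations with u' = u''' = 0 on ∂Ω, this gives D[u] ≥ C m^{α+2} (E[u − ū])^{(α+1)/2}, where ū is the mean of u, E[v] = (1/2)∫_Ω|v'|² dx, and D[u] = ∫_Ω u^{α+2}|u'''|^{α+1} dx. -/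
open Real MeasureTheory

/-! The weight `u ^ (α + 2)` is at least `m ^ (α + 2)` pointwise, which bounds the dissipation
below by `m ^ (α + 2) ‖u'''‖ ^ (α + 1)`; raising the Poincaré estimate
`E ≤ C_P ‖u'''‖ ^ 2` to the power `(α + 1) / 2` turns the norm back into the energy. -/

theorem const_rpow_mul_integral_le_integral_rpow_mul {a b m p : ℝ} {u w : ℝ → ℝ}
    (hab : a ≤ b) (hm : 0 ≤ m) (hp : 0 ≤ p) (hmu : ∀ x ∈ Set.Icc a b, m ≤ u x)
    (hw₀ : ∀ x ∈ Set.Icc a b, 0 ≤ w x) (hw : IntervalIntegrable w volume a b)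
    (huw : IntervalIntegrable (fun x => u x ^ p * w x) volume a b) :
    m ^ p * ∫ x in a..b, w x ≤ ∫ x in a..b, u x ^ p * w x := by
  rw [← intervalIntegral.integral_const_mul]
  refine intervalIntegral.integral_mono_on hab (hw.const_mul _) huw fun x hx => ?_
  exact mul_le_mul_of_nonneg_right (rpow_le_rpow hm (hmu x hx) hp) (hw₀ x hx)

theorem rpow_inv_mul_rpow_le_of_le_mul_rpow {C E I q : ℝ} (hC : 0 < C) (hE : 0 ≤ E)
    (hI : 0 ≤ I) (hq : 0 < q) (h : E ≤ C * I ^ (2 / q)) :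
    C ^ (-(q / 2)) * E ^ (q / 2) ≤ I := by
  have hpow : E ^ (q / 2) ≤ C ^ (q / 2) * I :=
    calc E ^ (q / 2) ≤ (C * I ^ (2 / q)) ^ (q / 2) := rpow_le_rpow hE h (by positivity)
      _ = C ^ (q / 2) * I := by
        rw [mul_rpow hC.le (rpow_nonneg hI _), ← rpow_mul hI,
          show 2 / q * (q / 2) = 1 by field_simp, rpow_one]
  calc C ^ (-(q / 2)) * E ^ (q / 2) ≤ C ^ (-(q / 2)) * (C ^ (q / 2) * I) := by gcongr
    _ = I := by rw [← mul_assoc, ← rpow_add hC, neg_add_cancel, rpow_zero, one_mul]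

theorem lojasiewicz_simon_estimate_general (a b α m CP : ℝ) (hab : a < b) (hα : 0 < α)
    (hm : 0 < m) (hCP : 0 < CP) (u : ℝ → ℝ) (hu : ContDiff ℝ 3 u)
    (hlb : ∀ x ∈ Set.Icc a b, m ≤ u x)
    (hP : (1 / 2) * (∫ x in a..b, (deriv u x) ^ 2)
        ≤ CP * ((∫ x in a..b, |iteratedDeriv 3 u x| ^ (α + 1)) ^ (2 / (α + 1)))) :
    m ^ (α + 2) * (∫ x in a..b, |iteratedDeriv 3 u x| ^ (α + 1))
        ≤ (∫ x in a..b, u x ^ (α + 2) * |iteratedDeriv 3 u x| ^ (α + 1)) ∧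
    ∃ C > 0, C * m ^ (α + 2) *
        ((1 / 2) * (∫ x in a..b, (deriv u x) ^ 2)) ^ ((α + 1) / 2)
      ≤ ∫ x in a..b, u x ^ (α + 2) * |iteratedDeriv 3 u x| ^ (α + 1) := by
  have hu''' : Continuous (iteratedDeriv 3 u) := hu.continuous_iteratedDeriv 3 le_rfl
  have hw : Continuous fun x => |iteratedDeriv 3 u x| ^ (α + 1) :=
    hu'''.abs.rpow_const fun _ => Or.inr (by linarith)
  have huw : Continuous fun x => u x ^ (α + 2) * |iteratedDeriv 3 u x| ^ (α + 1) :=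
    (hu.continuous.rpow_const fun _ => Or.inr (by linarith)).mul hw
  have hdiss := const_rpow_mul_integral_le_integral_rpow_mul hab.le hm.le (by linarith) hlb
    (fun x _ => rpow_nonneg (abs_nonneg _) _) (hw.intervalIntegrable a b)
    (huw.intervalIntegrable a b)
  have hnorm := rpow_inv_mul_rpow_le_of_le_mul_rpow hCP
    (mul_nonneg (by norm_num) (intervalIntegral.integral_nonneg hab.le fun x _ => sq_nonneg _))
    (intervalIntegral.integral_nonneg hab.le fun x _ => rpow_nonneg (abs_nonneg _) _)
    (by linarith) hP
  refine ⟨hdiss, CP ^ (-((α + 1) / 2)), rpow_pos_of_pos hCP _, ?_⟩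
  calc _ = m ^ (α + 2) * (CP ^ (-((α + 1) / 2)) *
        ((1 / 2) * (∫ x in a..b, (deriv u x) ^ 2)) ^ ((α + 1) / 2)) := by ring
    _ ≤ _ := le_trans (by gcongr) hdiss

/-- Łojasiewicz–Simon type estimate: if u ≥ m > 0 on Ω̄ then
D[u] = ∫ u^{α+2}|u'''|^{α+1} ≥ m^{α+2}‖u'''‖^{α+1}_{L_{α+1}}, and combined with the
Poincaré estimate E[u − ū] ≤ C_P ‖u'''‖²_{L_{α+1}} one gets
D[u] ≥ C m^{α+2} (E[u − ū])^{(α+1)/2}, where E[u − ū] = (1/2)∫|u'|². -/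
theorem lojasiewicz_simon_estimate (a b α m CP : ℝ) (hab : a < b) (hα : 0 < α)
    (hm : 0 < m) (hCP : 0 < CP) (u : ℝ → ℝ) (hu : ContDiff ℝ 3 u)
    (hlb : ∀ x ∈ Set.Icc a b, m ≤ u x)
    (hbc1 : deriv u a = 0) (hbc2 : deriv u b = 0)
    (hbc3 : iteratedDeriv 3 u a = 0) (hbc4 : iteratedDeriv 3 u b = 0)
    (hP : (1 / 2) * (∫ x in a..b, (deriv u x) ^ 2)
        ≤ CP * ((∫ x in a..b, |iteratedDeriv 3 u x| ^ (α + 1)) ^ (2 / (α + 1)))) :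
    m ^ (α + 2) * (∫ x in a..b, |iteratedDeriv 3 u x| ^ (α + 1))
        ≤ (∫ x in a..b, u x ^ (α + 2) * |iteratedDeriv 3 u x| ^ (α + 1)) ∧
    ∃ C > 0, C * m ^ (α + 2) *
        ((1 / 2) * (∫ x in a..b, (deriv u x) ^ 2)) ^ ((α + 1) / 2)
      ≤ ∫ x in a..b, u x ^ (α + 2) * |iteratedDeriv 3 u x| ^ (α + 1) :=
  lojasiewicz_simon_estimate_general a b α m CP hab hα hm hCP u hu hlb hP
end
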